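/- Let (X, μ) be a finite measure space and u, v ∈ L¹(X, μ) with u ≥ 0 and v ≥ 0 almost everywhere. Suppose that for every real t with 0 ≤ t ≤ μ(X), ∫₀ᵗ u*(s) ds ≤ ∫₀ᵗ v*(s) ds, where u*, v* are the decreasing rearrangements of u and v. Then for every p with 1 ≤ p ≤ ∞, the L^p(X, μ)-norm of u is at most the L^p(X, μ)-norm of v. -/

import Mathlib

/-!
Both norms are read off the stop-loss transform `c ↦ ∫ (f - c)₊ dμ`. For `1 < q`,
`x ^ q = q (q - 1) ∫₀^∞ c ^ (q - 2) (x - c)₊ dc`, so `∫ f ^ q` is a positive mixture of the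
transform; `q = 1` is its value at `c = 0`, and `‖f‖_∞` is the least `c ≥ 0` at which it vanishes.
Since `u*` on `(0, μ X)` is equimeasurable with `u`, `∫ (u - c)₊ dμ = ∫₀^{μ X} (u* - c)₊`; as
`u* > c` exactly on `(0, a)` with `a = μ {u > c}`, this is
`∫₀^a u* - a c ≤ ∫₀^a v* - a c ≤ ∫₀^{μ X} (v* - c)₊ = ∫ (v - c)₊ dμ`.
-/

open MeasureTheory Set

noncomputable section

/-- Decreasing rearrangement of `f` with respect to the measure `μ`:
`f*(s) = inf {c : μ {f > c} ≤ s}`. -/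
def decRearr {X : Type*} [MeasurableSpace X] (μ : Measure X) (f : X → ℝ) (s : ℝ) : ℝ :=
  sInf {c : ℝ | μ {x | c < f x} ≤ ENNReal.ofReal s}

/-- A measure is nonatomic if every set of positive measure has a measurable subset of
strictly smaller positive measure. -/
def IsNonatomic {X : Type*} [MeasurableSpace X] (μ : Measure X) : Prop :=
  ∀ s : Set X, MeasurableSet s → μ s ≠ 0 →
    ∃ t, t ⊆ s ∧ MeasurableSet t ∧ 0 < μ t ∧ μ t < μ s

open Filter
open scoped ENNReal

section StopLoss

variable {α : Type*} [MeasurableSpace α] {μ : Measure α}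

theorem ofReal_integral_le_lintegral_ofReal {f : α → ℝ} (hf : Integrable f μ) :
    ENNReal.ofReal (∫ x, f x ∂μ) ≤ ∫⁻ x, ENNReal.ofReal (f x) ∂μ := by
  rw [integral_eq_lintegral_pos_part_sub_lintegral_neg_part hf]
  exact (ENNReal.ofReal_le_ofReal (sub_le_self _ ENNReal.toReal_nonneg)).trans
    ENNReal.ofReal_toReal_le

theorem intervalIntegral_rpow_mul_sub {q x : ℝ} (hq : 1 < q) (hx : 0 ≤ x) :
    ∫ c in (0 : ℝ)..x, c ^ (q - 2) * (x - c) = x ^ q / (q * (q - 1)) := by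
  have hpow : ∀ {y r : ℝ}, 0 ≤ y → r ≠ 0 → y ^ (r - 1) * y = y ^ r := fun hy hr => by
    rw [← Real.rpow_add_one' hy (by simpa using hr), sub_add_cancel]
  have hq1 : q - 1 ≠ 0 := by linarith
  have hint : ∀ r : ℝ, -1 < r → IntervalIntegrable (fun c : ℝ => c ^ r) volume 0 x :=
    fun r hr => intervalIntegral.intervalIntegrable_rpow' hr
  calc ∫ c in (0 : ℝ)..x, c ^ (q - 2) * (x - c)
      = ∫ c in (0 : ℝ)..x, (x * c ^ (q - 2) - c ^ (q - 1)) := by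
        refine intervalIntegral.integral_congr fun c hc => ?_
        rw [uIcc_of_le hx] at hc
        rw [← hpow hc.1 hq1, show q - 1 - 1 = q - 2 by ring]
        ring
    _ = x * (x ^ (q - 1) / (q - 1)) - x ^ q / q := by
        rw [intervalIntegral.integral_sub ((hint _ (by linarith)).const_mul x)
          (hint _ (by linarith)), intervalIntegral.integral_const_mul,
          integral_rpow (Or.inl (by linarith)), integral_rpow (Or.inl (by linarith)),
          Real.zero_rpow (by linarith), Real.zero_rpow (by linarith)]
        ring_nf
    _ = x ^ q / (q * (q - 1)) := by
        rw [← hpow hx (by linarith : q ≠ 0)]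
        field_simp
        ring

theorem ofReal_rpow_eq_mul_lintegral_ofReal_sub {q x : ℝ} (hq : 1 < q) (hx : 0 ≤ x) :
    ENNReal.ofReal (x ^ q) = ENNReal.ofReal (q * (q - 1)) *
      ∫⁻ c in Ioi 0, ENNReal.ofReal (c ^ (q - 2)) * ENNReal.ofReal (x - c) := by
  have hvanish : ∫⁻ c in Ioi x, ENNReal.ofReal (c ^ (q - 2)) * ENNReal.ofReal (x - c) = 0 := by
    refine (setLIntegral_congr_fun measurableSet_Ioi fun c hc => ?_).trans lintegral_zero
    rw [ENNReal.ofReal_of_nonpos (sub_nonpos.2 (le_of_lt hc)), mul_zero]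
  have hint : IntegrableOn (fun c : ℝ => c ^ (q - 2) * (x - c)) (Ioc 0 x) :=
    ((intervalIntegral.intervalIntegrable_rpow' (by linarith)).mul_continuousOn
      (by fun_prop : ContinuousOn (fun c : ℝ => x - c) _)).1
  have hnonneg : 0 ≤ᵐ[volume.restrict (Ioc 0 x)] fun c : ℝ => c ^ (q - 2) * (x - c) :=
    (ae_restrict_iff' measurableSet_Ioc).2 <| Eventually.of_forall fun c hc =>
      mul_nonneg (Real.rpow_nonneg hc.1.le _) (sub_nonneg.2 hc.2)
  rw [← Ioc_union_Ioi_eq_Ioi hx, lintegral_union measurableSet_Ioi Ioc_disjoint_Ioi_same,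
    hvanish, add_zero,
    setLIntegral_congr_fun measurableSet_Ioc fun c hc =>
      (ENNReal.ofReal_mul (Real.rpow_nonneg hc.1.le _)).symm,
    ← ofReal_integral_eq_lintegral_ofReal hint hnonneg, ← intervalIntegral.integral_of_le hx,
    intervalIntegral_rpow_mul_sub hq hx, ← ENNReal.ofReal_mul (by nlinarith),
    mul_div_cancel₀ _ (by nlinarith)]

theorem lintegral_ofReal_rpow_eq_mul_lintegral [SFinite μ] {f : α → ℝ} (hf : AEMeasurable f μ)
    (hf0 : 0 ≤ᵐ[μ] f) {q : ℝ} (hq : 1 < q) :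
    ∫⁻ x, ENNReal.ofReal (f x ^ q) ∂μ = ENNReal.ofReal (q * (q - 1)) *
      ∫⁻ c in Ioi 0, ENNReal.ofReal (c ^ (q - 2)) * ∫⁻ x, ENNReal.ofReal (f x - c) ∂μ := by
  have hmeas : AEMeasurable (Function.uncurry fun x (c : ℝ) =>
      ENNReal.ofReal (c ^ (q - 2)) * ENNReal.ofReal (f x - c)) (μ.prod (volume.restrict (Ioi 0))) :=
    (by fun_prop : Measurable fun c : ℝ => ENNReal.ofReal (c ^ (q - 2))).comp_aemeasurable
      measurable_snd.aemeasurable |>.mul <|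
      ENNReal.measurable_ofReal.comp_aemeasurable (hf.comp_fst.sub measurable_snd.aemeasurable)
  rw [lintegral_congr_ae (hf0.mono fun x hx => ofReal_rpow_eq_mul_lintegral_ofReal_sub hq hx),
    lintegral_const_mul' _ _ ENNReal.ofReal_ne_top, lintegral_lintegral_swap hmeas]
  simp_rw [lintegral_const_mul' _ _ ENNReal.ofReal_ne_top]

section

variable {f g : α → ℝ} (hf : AEMeasurable f μ) (hf0 : 0 ≤ᵐ[μ] f)
  (hfg : ∀ c, 0 ≤ c → ∫⁻ x, ENNReal.ofReal (f x - c) ∂μ ≤ ∫⁻ x, ENNReal.ofReal (g x - c) ∂μ)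
include hf hf0 hfg

theorem lintegral_ofReal_rpow_le_of_lintegral_ofReal_sub_le [SFinite μ] (hg : AEMeasurable g μ)
    (hg0 : 0 ≤ᵐ[μ] g) {q : ℝ} (hq : 1 ≤ q) :
    ∫⁻ x, ENNReal.ofReal (f x ^ q) ∂μ ≤ ∫⁻ x, ENNReal.ofReal (g x ^ q) ∂μ := by
  rcases hq.eq_or_lt with rfl | hq
  · simpa only [Real.rpow_one, sub_zero] using hfg 0 le_rfl
  rw [lintegral_ofReal_rpow_eq_mul_lintegral hf hf0 hq,
    lintegral_ofReal_rpow_eq_mul_lintegral hg hg0 hq]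
  exact mul_le_mul_right (setLIntegral_mono' measurableSet_Ioi fun c hc =>
    mul_le_mul_right (hfg c (le_of_lt hc)) _) _

theorem eLpNormEssSup_le_of_lintegral_ofReal_sub_le : eLpNormEssSup f μ ≤ eLpNormEssSup g μ := by
  rcases eq_top_or_lt_top (eLpNormEssSup g μ) with hg | hg
  · simp [hg]
  set C := (eLpNormEssSup g μ).toReal
  have hgC : ∫⁻ x, ENNReal.ofReal (g x - C) ∂μ = 0 := by
    refine (lintegral_congr_ae ?_).trans lintegral_zero
    filter_upwards [ae_le_eLpNormEssSup (f := g) (μ := μ)] with x hx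
    have : ‖g x‖ ≤ C := by simpa using ENNReal.toReal_mono hg.ne hx
    exact ENNReal.ofReal_of_nonpos (by linarith [le_abs_self (g x), Real.norm_eq_abs (g x)])
  have hfC := (lintegral_eq_zero_iff' (ENNReal.measurable_ofReal.comp_aemeasurable
    (hf.sub_const C))).1 (nonpos_iff_eq_zero.1 (hgC ▸ hfg C ENNReal.toReal_nonneg))
  calc eLpNormEssSup f μ ≤ ENNReal.ofReal C := by
        refine eLpNormEssSup_le_of_ae_bound ?_
        filter_upwards [hfC, hf0] with x hx hx0
        rw [Real.norm_of_nonneg hx0]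
        simpa using hx
    _ = eLpNormEssSup g μ := ENNReal.ofReal_toReal hg.ne

theorem eLpNorm_le_of_lintegral_ofReal_sub_le [SFinite μ] (hg : AEMeasurable g μ)
    (hg0 : 0 ≤ᵐ[μ] g) {p : ℝ≥0∞} (hp : 1 ≤ p) : eLpNorm f p μ ≤ eLpNorm g p μ := by
  rcases eq_or_ne p ∞ with rfl | hp_top
  · simpa only [eLpNorm_exponent_top] using eLpNormEssSup_le_of_lintegral_ofReal_sub_le hf hf0 hfg
  have hp0 : p ≠ 0 := (zero_lt_one.trans_le hp).ne'
  have hq : 1 ≤ p.toReal := by simpa using ENNReal.toReal_mono hp_top hp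
  have henorm : ∀ {h : α → ℝ}, 0 ≤ᵐ[μ] h →
      ∫⁻ x, ‖h x‖ₑ ^ p.toReal ∂μ = ∫⁻ x, ENNReal.ofReal (h x ^ p.toReal) ∂μ := fun {h} h0 =>
    lintegral_congr_ae <| h0.mono fun x (hx : 0 ≤ h x) => by
      dsimp only
      rw [Real.enorm_eq_ofReal hx, ENNReal.ofReal_rpow_of_nonneg hx (by linarith)]
  rw [eLpNorm_eq_lintegral_rpow_enorm_toReal hp0 hp_top,
    eLpNorm_eq_lintegral_rpow_enorm_toReal hp0 hp_top, henorm hf0, henorm hg0]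
  exact ENNReal.rpow_le_rpow
    (lintegral_ofReal_rpow_le_of_lintegral_ofReal_sub_le hf hf0 hfg hg hg0 hq) (by positivity)

end

end StopLoss

theorem integral_Ioo_sub_const {g : ℝ → ℝ} {a : ℝ} (ha : 0 ≤ a) (hg : IntegrableOn g (Ioo 0 a))
    (c : ℝ) : ∫ s in Ioo 0 a, (g s - c) = (∫ s in (0 : ℝ)..a, g s) - a * c := by
  rw [integral_sub hg (integrable_const c), setIntegral_const, Measure.real, Real.volume_Ioo,
    sub_zero, ENNReal.toReal_ofReal ha, smul_eq_mul, intervalIntegral.integral_of_le ha,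
    integral_Ioc_eq_integral_Ioo]

theorem ofReal_intervalIntegral_sub_le_setLIntegral {g : ℝ → ℝ} {a b : ℝ} (ha : 0 ≤ a)
    (hab : a ≤ b) (hg : IntegrableOn g (Ioo 0 b)) (c : ℝ) :
    ENNReal.ofReal ((∫ s in (0 : ℝ)..a, g s) - a * c) ≤
      ∫⁻ s in Ioo 0 b, ENNReal.ofReal (g s - c) := by
  have hga : IntegrableOn g (Ioo 0 a) := hg.mono_set (Ioo_subset_Ioo_right hab)
  rw [← integral_Ioo_sub_const ha hga]
  exact (ofReal_integral_le_lintegral_ofReal (hga.sub (integrable_const c))).trans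
    (lintegral_mono_set (Ioo_subset_Ioo_right hab))

section DecRearr

variable {X : Type*} [MeasurableSpace X] {μ : Measure X} {f : X → ℝ}

theorem nonneg_of_measure_lt_le (hf0 : 0 ≤ᵐ[μ] f) {s c : ℝ} (hs : s ∈ Ioo 0 (μ univ).toReal)
    (hc : μ {x | c < f x} ≤ ENNReal.ofReal s) : 0 ≤ c := by
  by_contra! hc0
  have huniv : μ univ ≤ μ {x | c < f x} :=
    measure_mono_ae <| hf0.mono fun x (hx : 0 ≤ f x) _ => hc0.trans_le hx
  exact hs.2.not_ge (ENNReal.toReal_le_of_le_ofReal hs.1.le (huniv.trans hc))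

variable [IsFiniteMeasure μ]

theorem nonempty_setOf_measure_lt_le (hf : AEMeasurable f μ) {s : ℝ} (hs : 0 < s) :
    {c : ℝ | μ {x | c < f x} ≤ ENNReal.ofReal s}.Nonempty := by
  have hanti : Antitone fun c : ℝ => {x | c < f x} := fun c d hcd x hx => hcd.trans_lt hx
  have hempty : ⋂ c : ℝ, {x | c < f x} = ∅ :=
    eq_empty_of_forall_notMem fun x hx => lt_irrefl (f x) (mem_iInter.1 hx (f x))
  have htendsto := tendsto_measure_iInter_atTop (μ := μ)
    (fun c => nullMeasurableSet_lt aemeasurable_const hf) hanti ⟨0, measure_ne_top μ _⟩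
  rw [hempty, measure_empty] at htendsto
  obtain ⟨c, hc⟩ := (htendsto.eventually (gt_mem_nhds (ENNReal.ofReal_pos.2 hs))).exists
  exact ⟨c, hc.le⟩

theorem decRearr_le_iff (hf : AEMeasurable f μ) (hf0 : 0 ≤ᵐ[μ] f) {s c : ℝ}
    (hs : s ∈ Ioo 0 (μ univ).toReal) :
    decRearr μ f s ≤ c ↔ μ {x | c < f x} ≤ ENNReal.ofReal s := by
  refine ⟨fun h => ?_, fun h => csInf_le ⟨0, fun d hd => nonneg_of_measure_lt_le hf0 hs hd⟩ h⟩
  -- `c ↦ μ {f > c}` is right-continuous, so the infimum defining `decRearr` is attained.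
  have hunion : {x | c < f x} = ⋃ n : ℕ, {x | c + 1 / (n + 1) < f x} := by
    ext x
    simp only [mem_ofPred_eq, mem_iUnion]
    refine ⟨fun hx => ?_, fun ⟨n, hn⟩ => lt_trans (lt_add_of_pos_right c Nat.one_div_pos_of_nat) hn⟩
    obtain ⟨n, hn⟩ := exists_nat_one_div_lt (sub_pos.2 hx)
    exact ⟨n, by linarith⟩
  have hmono : Monotone fun n : ℕ => {x | c + 1 / (n + 1) < f x} :=
    fun m n hmn x (hx : c + 1 / (m + 1) < f x) =>
      lt_of_le_of_lt (show c + 1 / ((n : ℝ) + 1) ≤ c + 1 / (m + 1) by gcongr) hx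
  rw [hunion, hmono.measure_iUnion]
  refine iSup_le fun n => ?_
  obtain ⟨d, hd, hdc⟩ := exists_lt_of_csInf_lt (nonempty_setOf_measure_lt_le hf hs.1)
    (h.trans_lt (lt_add_of_pos_right c Nat.one_div_pos_of_nat))
  exact (measure_mono fun x hx => hdc.trans hx).trans hd

theorem lt_decRearr_iff (hf : AEMeasurable f μ) (hf0 : 0 ≤ᵐ[μ] f) {s c : ℝ}
    (hs : s ∈ Ioo 0 (μ univ).toReal) :
    c < decRearr μ f s ↔ s < (μ {x | c < f x}).toReal := by
  rw [← not_le, decRearr_le_iff hf hf0 hs, not_le,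
    ENNReal.ofReal_lt_iff_lt_toReal hs.1.le (measure_ne_top μ _)]

theorem decRearr_antitoneOn (hf : AEMeasurable f μ) (hf0 : 0 ≤ᵐ[μ] f) :
    AntitoneOn (decRearr μ f) (Ioo 0 (μ univ).toReal) := fun _ hs _ ht hst =>
  csInf_le_csInf ⟨0, fun _ hd => nonneg_of_measure_lt_le hf0 ht hd⟩
    (nonempty_setOf_measure_lt_le hf hs.1) fun _ hc => hc.trans (ENNReal.ofReal_le_ofReal hst)

theorem aemeasurable_decRearr (hf : AEMeasurable f μ) (hf0 : 0 ≤ᵐ[μ] f) :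
    AEMeasurable (decRearr μ f) (volume.restrict (Ioo 0 (μ univ).toReal)) :=
  aemeasurable_restrict_of_antitoneOn measurableSet_Ioo (decRearr_antitoneOn hf hf0)

theorem setOf_lt_decRearr_inter_Ioo (hf : AEMeasurable f μ) (hf0 : 0 ≤ᵐ[μ] f) (c : ℝ) :
    {s | c < decRearr μ f s} ∩ Ioo 0 (μ univ).toReal = Ioo 0 (μ {x | c < f x}).toReal := by
  have hle : (μ {x | c < f x}).toReal ≤ (μ univ).toReal :=
    ENNReal.toReal_mono (measure_ne_top μ _) (measure_mono (subset_univ _))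
  ext s
  simp only [mem_inter_iff, mem_ofPred_eq, mem_Ioo]
  constructor
  · rintro ⟨hc, hs0, hsM⟩
    exact ⟨hs0, (lt_decRearr_iff hf hf0 ⟨hs0, hsM⟩).1 hc⟩
  · rintro ⟨hs0, hsa⟩
    exact ⟨(lt_decRearr_iff hf hf0 ⟨hs0, hsa.trans_le hle⟩).2 hsa, hs0, hsa.trans_le hle⟩

theorem map_restrict_decRearr (hf : AEMeasurable f μ) (hf0 : 0 ≤ᵐ[μ] f) :
    (volume.restrict (Ioo 0 (μ univ).toReal)).map (decRearr μ f) = μ.map f := by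
  have hmeas := aemeasurable_decRearr hf hf0
  refine Measure.ext_of_Iic _ _ fun c => ?_
  rw [← compl_Ioi, measure_compl measurableSet_Ioi (measure_ne_top _ _),
    measure_compl measurableSet_Ioi (measure_ne_top _ _),
    Measure.map_apply_of_aemeasurable hmeas measurableSet_Ioi,
    Measure.map_apply_of_aemeasurable hf measurableSet_Ioi,
    Measure.map_apply_of_aemeasurable hmeas MeasurableSet.univ,
    Measure.map_apply_of_aemeasurable hf MeasurableSet.univ, preimage_univ, preimage_univ,
    Measure.restrict_apply' measurableSet_Ioo, Measure.restrict_apply' measurableSet_Ioo,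
    univ_inter]
  change _ - volume ({s | c < decRearr μ f s} ∩ _) = _ - μ {x | c < f x}
  rw [setOf_lt_decRearr_inter_Ioo hf hf0 c, Real.volume_Ioo, Real.volume_Ioo, sub_zero, sub_zero,
    ENNReal.ofReal_toReal (measure_ne_top μ _), ENNReal.ofReal_toReal (measure_ne_top μ _)]

theorem lintegral_comp_decRearr (hf : AEMeasurable f μ) (hf0 : 0 ≤ᵐ[μ] f) {F : ℝ → ℝ≥0∞}
    (hF : Measurable F) :
    ∫⁻ s in Ioo 0 (μ univ).toReal, F (decRearr μ f s) = ∫⁻ x, F (f x) ∂μ := by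
  rw [← lintegral_map' hF.aemeasurable (aemeasurable_decRearr hf hf0),
    map_restrict_decRearr hf hf0, lintegral_map' hF.aemeasurable hf]

theorem integrableOn_decRearr (hf : Integrable f μ) (hf0 : 0 ≤ᵐ[μ] f) :
    IntegrableOn (decRearr μ f) (Ioo 0 (μ univ).toReal) := by
  refine ⟨(aemeasurable_decRearr hf.aemeasurable hf0).aestronglyMeasurable, ?_⟩
  rw [HasFiniteIntegral, lintegral_comp_decRearr hf.aemeasurable hf0 measurable_enorm]
  exact hf.2

theorem lintegral_ofReal_decRearr_sub (hf : Integrable f μ) (hf0 : 0 ≤ᵐ[μ] f) (c : ℝ) :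
    ∫⁻ s in Ioo 0 (μ univ).toReal, ENNReal.ofReal (decRearr μ f s - c) =
      ENNReal.ofReal ((∫ s in (0 : ℝ)..(μ {x | c < f x}).toReal, decRearr μ f s) -
        (μ {x | c < f x}).toReal * c) := by
  set a := (μ {x | c < f x}).toReal
  have hlevel := setOf_lt_decRearr_inter_Ioo hf.aemeasurable hf0 c
  have hsub : Ioo 0 a ⊆ Ioo 0 (μ univ).toReal := hlevel ▸ inter_subset_right
  have hvanish : ∫⁻ s in Ioo 0 (μ univ).toReal \ Ioo 0 a,
      ENNReal.ofReal (decRearr μ f s - c) = 0 := by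
    refine (setLIntegral_congr_fun (measurableSet_Ioo.diff measurableSet_Ioo)
      fun s hs => ENNReal.ofReal_of_nonpos ?_).trans lintegral_zero
    refine sub_nonpos.2 (not_lt.1 fun hc => hs.2 ?_)
    exact hlevel ▸ ⟨hc, hs.1⟩
  have hpos : 0 ≤ᵐ[volume.restrict (Ioo 0 a)] fun s => decRearr μ f s - c :=
    (ae_restrict_iff' measurableSet_Ioo).2 <| Eventually.of_forall fun s hs =>
      sub_nonneg.2 (hlevel.symm ▸ hs).1.le
  have hint := (integrableOn_decRearr hf hf0).mono_set hsub
  rw [← lintegral_inter_add_sdiff _ _ measurableSet_Ioo, hvanish, add_zero,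
    inter_eq_right.2 hsub, ← ofReal_integral_eq_lintegral_ofReal
      (f := fun s => decRearr μ f s - c) (hint.sub (integrable_const c)) hpos,
    integral_Ioo_sub_const ENNReal.toReal_nonneg hint]

end DecRearr

/-- If `u, v ≥ 0` a.e. and `∫₀ᵗ u* ≤ ∫₀ᵗ v*` for all `t`, then `‖u‖_p ≤ ‖v‖_p` for all
`1 ≤ p ≤ ∞`. -/
theorem majorization_Lp_of_nonneg {X : Type*} [MeasurableSpace X] (μ : Measure X)
    [IsFiniteMeasure μ] (u v : X → ℝ) (hu : Integrable u μ) (hv : Integrable v μ)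
    (hupos : 0 ≤ᵐ[μ] u) (hvpos : 0 ≤ᵐ[μ] v)
    (hstar : ∀ t : ℝ, 0 ≤ t → t ≤ (μ univ).toReal →
      (∫ s in (0 : ℝ)..t, decRearr μ u s) ≤ ∫ s in (0 : ℝ)..t, decRearr μ v s) :
    ∀ p : ENNReal, 1 ≤ p → eLpNorm u p μ ≤ eLpNorm v p μ := by
  intro p hp
  refine eLpNorm_le_of_lintegral_ofReal_sub_le hu.aemeasurable hupos (fun c _ => ?_)
    hv.aemeasurable hvpos hp
  have hF : Measurable fun y : ℝ => ENNReal.ofReal (y - c) := by fun_prop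
  set a := (μ {x | c < u x}).toReal
  have haM : a ≤ (μ univ).toReal :=
    ENNReal.toReal_mono (measure_ne_top μ _) (measure_mono (subset_univ _))
  rw [← lintegral_comp_decRearr hu.aemeasurable hupos hF,
    ← lintegral_comp_decRearr hv.aemeasurable hvpos hF, lintegral_ofReal_decRearr_sub hu hupos]
  calc ENNReal.ofReal ((∫ s in (0 : ℝ)..a, decRearr μ u s) - a * c)
      ≤ ENNReal.ofReal ((∫ s in (0 : ℝ)..a, decRearr μ v s) - a * c) :=
        ENNReal.ofReal_le_ofReal (by linarith [hstar a ENNReal.toReal_nonneg haM])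
    _ ≤ _ := ofReal_intervalIntegral_sub_le_setLIntegral ENNReal.toReal_nonneg haM
        (integrableOn_decRearr hv hvpos) c
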